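/- Fix a common factor dimension a and two constrained polynomial zonotope parameterizations p₁(α) ∈ ℝ^n (with data c₁, G₁, Ē₁, A₁, b₁, R̄₁ and h₁ generators, q₁ constraint terms) and p₂(α) ∈ ℝ^w (with data c₂, G₂, Ē₂, A₂, b₂, R̄₂ and h₂ generators, q₂ constraint terms). Then the dependency-preserving Cartesian-product set { (p₁(α); p₂(α)) ∈ ℝ^{n+w} : α ∈ [-1,1]^a satisfying both constraint equations } (vertical stacking of the two vectors) equals CPZ([c₁; c₂], [[G₁, 0],[0, G₂]], [Ē₁ Ē₂], [[A₁, 0],[0, A₂]], [b₁; b₂], [R̄₁ R̄₂]), where the generator matrix is block diagonal, the exponent and constraint-exponent matrices are horizontal concatenations, and the constraint matrix is block diagonal. Hence the exact Cartesian product of two CPZs admits an algebraically exact CPZ representation. -/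
import Mathlib


open scoped BigOperators

/-- A constrained polynomial zonotope. -/
def CPZ {N P H M Q : Type*} [Fintype P] [Fintype H] [Fintype Q]
    (c : N → ℝ) (G : N → H → ℝ) (E : P → H → ℕ)
    (A : M → Q → ℝ) (b : M → ℝ) (R : P → Q → ℕ) : Set (N → ℝ) :=
  { x | ∃ α : P → ℝ, (∀ k, α k ∈ Set.Icc (-1 : ℝ) 1) ∧
      (∀ r, ∑ j, (∏ k, α k ^ R k j) * A r j = b r) ∧
      x = fun ℓ => c ℓ + ∑ i, (∏ k, α k ^ E k i) * G ℓ i }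

/-- Exact Cartesian product of two CPZ parameterizations over a common factor
dimension: the dependency-preserving Cartesian-product set (vertical stacking)
admits an algebraically exact CPZ representation with block-diagonal generator
and constraint matrices. -/
theorem stmt8 {n w a h₁ h₂ m₁ m₂ q₁ q₂ : ℕ}
    (c₁ : Fin n → ℝ) (G₁ : Fin n → Fin h₁ → ℝ) (E₁ : Fin a → Fin h₁ → ℕ)
    (A₁ : Fin m₁ → Fin q₁ → ℝ) (b₁ : Fin m₁ → ℝ) (R₁ : Fin a → Fin q₁ → ℕ)
    (c₂ : Fin w → ℝ) (G₂ : Fin w → Fin h₂ → ℝ) (E₂ : Fin a → Fin h₂ → ℕ)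
    (A₂ : Fin m₂ → Fin q₂ → ℝ) (b₂ : Fin m₂ → ℝ) (R₂ : Fin a → Fin q₂ → ℕ) :
    { x : Fin n ⊕ Fin w → ℝ | ∃ α : Fin a → ℝ,
        (∀ k, α k ∈ Set.Icc (-1 : ℝ) 1) ∧
        (∀ r, ∑ i, (∏ k, α k ^ R₁ k i) * A₁ r i = b₁ r) ∧
        (∀ r, ∑ i, (∏ k, α k ^ R₂ k i) * A₂ r i = b₂ r) ∧
        x = Sum.elim
              (fun ℓ => c₁ ℓ + ∑ i, (∏ k, α k ^ E₁ k i) * G₁ ℓ i)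
              (fun ℓ => c₂ ℓ + ∑ i, (∏ k, α k ^ E₂ k i) * G₂ ℓ i) }
    = CPZ (P := Fin a) (H := Fin h₁ ⊕ Fin h₂) (M := Fin m₁ ⊕ Fin m₂)
        (Q := Fin q₁ ⊕ Fin q₂)
        (Sum.elim c₁ c₂)
        (fun ℓ i => match ℓ, i with
          | Sum.inl ℓ, Sum.inl i => G₁ ℓ i
          | Sum.inr ℓ, Sum.inr i => G₂ ℓ i
          | _, _ => 0)
        (fun k => Sum.elim (E₁ k) (E₂ k))
        (fun r j => match r, j with
          | Sum.inl r, Sum.inl j => A₁ r j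
          | Sum.inr r, Sum.inr j => A₂ r j
          | _, _ => 0)
        (Sum.elim b₁ b₂)
        (fun k => Sum.elim (R₁ k) (R₂ k)) := by
  ext x
  simp only [Set.mem_setOf_eq, CPZ]
  constructor
  · rintro ⟨α, hα, hc1, hc2, rfl⟩
    refine ⟨α, hα, ?_, ?_⟩
    · rintro (r | r)
      · simp [Fintype.sum_sum_type, hc1 r]
      · simp [Fintype.sum_sum_type, hc2 r]
    · funext ℓ
      cases ℓ with
      | inl ℓ => simp [Fintype.sum_sum_type]
      | inr ℓ => simp [Fintype.sum_sum_type]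
  · rintro ⟨α, hα, hc, rfl⟩
    refine ⟨α, hα, ?_, ?_, ?_⟩
    · intro r
      have := hc (Sum.inl r)
      simpa [Fintype.sum_sum_type] using this
    · intro r
      have := hc (Sum.inr r)
      simpa [Fintype.sum_sum_type] using this
    · funext ℓ
      cases ℓ with
      | inl ℓ => simp [Fintype.sum_sum_type]
      | inr ℓ => simp [Fintype.sum_sum_type]
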